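/- arXiv:1012.3674 — 2 statements merged into one kernel-verified Lean document; each statement's English description precedes it below -/
import Mathlib

section
/- For all complex numbers z1, z2, we have χ(z1, z2) ≤ 2·d(z1, z2), where d(z1,z2) = |z1/(1+|z1|) - z2/(1+|z2|)| and χ(z1,z2) = |z1-z2|/(√(1+|z1|²)√(1+|z2|²)). -/
/-!
Write `a = ‖z₁‖`, `b = ‖z₂‖`. Clearing denominators,
`d(z₁, z₂) = ‖(1 + b) z₁ - (1 + a) z₂‖ / ((1 + a)(1 + b))`, and the numerator dominates `‖z₁ - z₂‖`:
it equals `(1 + (a + b)/2)(z₁ - z₂) + ((b - a)/2)(z₁ + z₂)`, whose second term has norm at most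
`(a + b)/2 · ‖z₁ - z₂‖`. Hence `‖z₁ - z₂‖ ≤ (1 + a)(1 + b) d(z₁, z₂)`, and the theorem follows from
`(1 + a)(1 + b) ≤ 2 √(1 + a²) √(1 + b²)`, i.e. `(1 + t)² ≤ 2 (1 + t²)`.
-/

section NormedSpace

variable {E : Type*} [NormedAddCommGroup E] [NormedSpace ℝ E]

theorem norm_sub_le_norm_one_add_norm_smul_sub (x y : E) :
    ‖x - y‖ ≤ ‖(1 + ‖y‖) • x - (1 + ‖x‖) • y‖ := by
  set a := ‖x‖
  set b := ‖y‖
  have hdecomp : (1 + b) • x - (1 + a) • y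
      = (1 + (a + b) / 2) • (x - y) + ((b - a) / 2) • (x + y) := by
    module
  have hmain : ‖(1 + (a + b) / 2) • (x - y)‖ = (1 + (a + b) / 2) * ‖x - y‖ := by
    rw [norm_smul, Real.norm_of_nonneg (by positivity)]
  have hsmall : ‖((b - a) / 2) • (x + y)‖ ≤ (a + b) / 2 * ‖x - y‖ := by
    have hba : |b - a| ≤ ‖x - y‖ := by
      rw [abs_sub_comm]; exact abs_norm_sub_norm_le x y
    rw [norm_smul, Real.norm_eq_abs, abs_div, abs_two]
    calc |b - a| / 2 * ‖x + y‖ ≤ ‖x - y‖ / 2 * (a + b) := by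
          gcongr
          exact norm_add_le x y
      _ = (a + b) / 2 * ‖x - y‖ := by ring
  have hrev := norm_sub_norm_le ((1 + (a + b) / 2) • (x - y)) (-(((b - a) / 2) • (x + y)))
  rw [sub_neg_eq_add, ← hdecomp, norm_neg, hmain] at hrev
  linarith

theorem norm_sub_div_le_norm_smul_sub_smul (x y : E) :
    ‖x - y‖ / ((1 + ‖x‖) * (1 + ‖y‖)) ≤ ‖(1 + ‖x‖)⁻¹ • x - (1 + ‖y‖)⁻¹ • y‖ := by
  have hclear : (1 + ‖x‖)⁻¹ • x - (1 + ‖y‖)⁻¹ • y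
      = ((1 + ‖x‖) * (1 + ‖y‖))⁻¹ • ((1 + ‖y‖) • x - (1 + ‖x‖) • y) := by
    rw [smul_sub, smul_smul, smul_smul]
    congr 2 <;> field_simp
  rw [hclear, norm_smul, norm_inv, Real.norm_of_nonneg (by positivity), inv_mul_eq_div]
  gcongr
  exact norm_sub_le_norm_one_add_norm_smul_sub x y

end NormedSpace

theorem one_add_mul_one_add_le_two_mul_sqrt_mul_sqrt (a b : ℝ) :
    (1 + a) * (1 + b) ≤ 2 * (√(1 + a ^ 2) * √(1 + b ^ 2)) := by
  have hsq : ((1 + a) * (1 + b)) ^ 2 ≤ 4 * ((1 + a ^ 2) * (1 + b ^ 2)) := by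
    have hA : (1 + a) ^ 2 ≤ 2 * (1 + a ^ 2) := by nlinarith [sq_nonneg (a - 1)]
    have hB : (1 + b) ^ 2 ≤ 2 * (1 + b ^ 2) := by nlinarith [sq_nonneg (b - 1)]
    calc ((1 + a) * (1 + b)) ^ 2 = (1 + a) ^ 2 * (1 + b) ^ 2 := by ring
      _ ≤ (2 * (1 + a ^ 2)) * (2 * (1 + b ^ 2)) := by gcongr
      _ = 4 * ((1 + a ^ 2) * (1 + b ^ 2)) := by ring
  have hsqrt : 2 * (√(1 + a ^ 2) * √(1 + b ^ 2)) = √(4 * ((1 + a ^ 2) * (1 + b ^ 2))) := by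
    rw [Real.sqrt_mul (by norm_num), Real.sqrt_mul (by positivity),
      show (4 : ℝ) = 2 ^ 2 by norm_num, Real.sqrt_sq (by norm_num)]
  rw [hsqrt]
  exact (le_abs_self _).trans (Real.abs_le_sqrt hsq)

theorem Complex.div_one_add_ofReal (z : ℂ) (r : ℝ) : z / (1 + r) = (1 + r)⁻¹ • z := by
  rw [Complex.real_smul, div_eq_inv_mul]
  push_cast
  rfl

theorem stmt3 (z1 z2 : ℂ) :
    ‖z1 - z2‖ /
      (Real.sqrt (1 + ‖z1‖ ^ 2) * Real.sqrt (1 + ‖z2‖ ^ 2)) ≤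
    2 * ‖z1 / (1 + ‖z1‖) - z2 / (1 + ‖z2‖)‖ := by
  rw [Complex.div_one_add_ofReal, Complex.div_one_add_ofReal]
  have hprod := one_add_mul_one_add_le_two_mul_sqrt_mul_sqrt ‖z1‖ ‖z2‖
  calc ‖z1 - z2‖ / (√(1 + ‖z1‖ ^ 2) * √(1 + ‖z2‖ ^ 2))
      = 2 * (‖z1 - z2‖ / (2 * (√(1 + ‖z1‖ ^ 2) * √(1 + ‖z2‖ ^ 2)))) := by
        rw [mul_div_assoc', mul_div_mul_left _ _ two_ne_zero]
    _ ≤ 2 * (‖z1 - z2‖ / ((1 + ‖z1‖) * (1 + ‖z2‖))) := by gcongr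
    _ ≤ 2 * ‖(1 + ‖z1‖)⁻¹ • z1 - (1 + ‖z2‖)⁻¹ • z2‖ := by
        gcongr
        exact norm_sub_div_le_norm_smul_sub_smul z1 z2
end

section
/- Every continuous real-valued function θ : T → ℝ on the unit circle extends uniquely to a function on the closed unit disc D̄ that is continuous on D̄ and harmonic in the open disc D (via the Poisson integral). -/
/-
The Poisson integral `w ↦ circleAverage (poissonKernel 0 w • θ) 0 R` is the real part of the
Herglotz–Riesz integral of `θ`, which is holomorphic in `w`; hence it is harmonic in the disc.
The Poisson kernel is nonnegative, has circle average `1` (the Poisson formula for constants), and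
is uniformly small on the part of the circle at distance `≥ δ` from `z₀` once `w` is close to
`z₀`. So the Poisson integral tends to `θ z₀` as `w → z₀`, and glued with `θ` on the circle it is
continuous on the closed disc. Uniqueness is the Poisson formula itself: a function harmonic in the
disc and continuous up to the boundary is the Poisson integral of its boundary values.
-/

/-- `u` is harmonic on `s`: twice continuously differentiable with vanishing Laplacian. -/
def HarmonicOn (u : ℂ → ℝ) (s : Set ℂ) : Prop :=
  ContDiffOn ℝ 2 u s ∧
    ∀ z ∈ s,
      fderiv ℝ (fun w => fderiv ℝ u w 1) z 1 +
        fderiv ℝ (fun w => fderiv ℝ u w Complex.I) z Complex.I = 0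

open Complex Metric Real Set Filter Topology InnerProductSpace Laplacian

theorem fderiv_fderiv_apply_eq_iteratedFDeriv_two {𝕜 E F : Type*} [NontriviallyNormedField 𝕜]
    [NormedAddCommGroup E] [NormedSpace 𝕜 E] [NormedAddCommGroup F] [NormedSpace 𝕜 F]
    {u : E → F} {z : E} (hu : ContDiffAt 𝕜 2 u z) (v : E) :
    fderiv 𝕜 (fun w => fderiv 𝕜 u w v) z v = iteratedFDeriv 𝕜 2 u z ![v, v] := by
  have hdu : DifferentiableAt 𝕜 (fderiv 𝕜 u) z :=
    (hu.fderiv_right (m := 1) (by norm_num)).differentiableAt (by norm_num)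
  rw [iteratedFDeriv_two_apply, fderiv_clm_apply hdu (differentiableAt_const v)]
  simp

theorem laplacian_eq_fderiv_fderiv {F : Type*} [NormedAddCommGroup F] [NormedSpace ℝ F]
    {u : ℂ → F} {z : ℂ} (hu : ContDiffAt ℝ 2 u z) :
    Δ u z = fderiv ℝ (fun w => fderiv ℝ u w 1) z 1 +
      fderiv ℝ (fun w => fderiv ℝ u w I) z I := by
  rw [laplacian_eq_iteratedFDeriv_complexPlane, fderiv_fderiv_apply_eq_iteratedFDeriv_two hu,
    fderiv_fderiv_apply_eq_iteratedFDeriv_two hu]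

theorem harmonicOn_iff_harmonicOnNhd {u : ℂ → ℝ} {s : Set ℂ} (hs : IsOpen s) :
    HarmonicOn u s ↔ HarmonicOnNhd u s := by
  refine ⟨fun ⟨hu, hΔ⟩ z hz => ⟨hu.contDiffAt (hs.mem_nhds hz), ?_⟩,
    fun hu => ⟨hu.contDiffOn, fun z hz => ?_⟩⟩
  · filter_upwards [hs.mem_nhds hz] with w hw
    rw [laplacian_eq_fderiv_fderiv (hu.contDiffAt (hs.mem_nhds hw)), hΔ w hw, Pi.zero_apply]
  · rw [← laplacian_eq_fderiv_fderiv (hu z hz).1]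
    exact (hu z hz).2.eq_of_nhds

section PoissonKernel

variable {R : ℝ} {w ζ : ℂ}

theorem poissonKernel_zero_apply (w ζ : ℂ) :
    poissonKernel 0 w ζ = (‖ζ‖ ^ 2 - ‖w‖ ^ 2) / ‖ζ - w‖ ^ 2 := by
  simp [poissonKernel_def]

theorem poissonKernel_nonneg (hw : w ∈ ball 0 R) (hζ : ζ ∈ sphere 0 R) :
    0 ≤ poissonKernel 0 w ζ := by
  rw [mem_ball_zero_iff] at hw
  rw [mem_sphere_zero_iff_norm] at hζ
  rw [poissonKernel_zero_apply, hζ]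
  have := norm_nonneg w
  exact div_nonneg (by nlinarith) (sq_nonneg _)

theorem continuousOn_poissonKernel_sphere (hw : w ∈ ball 0 R) :
    ContinuousOn (poissonKernel 0 w) (sphere 0 R) := by
  have h := continuousOn_herglotzRieszKernel_sphere hw
  rw [abs_of_pos (pos_of_mem_ball hw)] at h
  rw [poissonKernel_eq_re_herglotzRieszKernel]
  exact continuous_re.comp_continuousOn h

theorem circleAverage_poissonKernel_smul_const (hw : w ∈ ball 0 R) (a : ℝ) :
    circleAverage (poissonKernel 0 w • fun _ => a) 0 R = a :=
  (harmonicOnNhd_const a).circleAverage_poissonKernel_smul hw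

theorem poissonKernel_le {z₀ : ℂ} {δ : ℝ} (hw : w ∈ ball 0 R) (hζ : ζ ∈ sphere 0 R)
    (hz₀ : z₀ ∈ sphere 0 R) (hδ : 0 < δ) (hζz₀ : δ ≤ ‖ζ - z₀‖) (hwz₀ : ‖w - z₀‖ ≤ δ / 2) :
    poissonKernel 0 w ζ ≤ 8 * R * ‖w - z₀‖ / δ ^ 2 := by
  rw [mem_ball_zero_iff] at hw
  rw [mem_sphere_zero_iff_norm] at hζ hz₀
  have hnum : ‖ζ‖ ^ 2 - ‖w‖ ^ 2 ≤ 2 * R * ‖w - z₀‖ := by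
    have : R - ‖w‖ ≤ ‖w - z₀‖ := by
      rw [← hz₀, norm_sub_rev]; exact norm_sub_norm_le z₀ w
    rw [hζ]; nlinarith [norm_nonneg w]
  have hden : δ / 2 ≤ ‖ζ - w‖ := by
    have := norm_sub_le_norm_sub_add_norm_sub ζ w z₀
    linarith
  rw [poissonKernel_zero_apply]
  calc (‖ζ‖ ^ 2 - ‖w‖ ^ 2) / ‖ζ - w‖ ^ 2 ≤ 2 * R * ‖w - z₀‖ / (δ / 2) ^ 2 := by
        gcongr
        have : 0 ≤ R := (norm_nonneg w).trans hw.le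
        positivity
    _ = 8 * R * ‖w - z₀‖ / δ ^ 2 := by field_simp; ring

end PoissonKernel

noncomputable def poissonIntegral (θ : ℂ → ℝ) (R : ℝ) (w : ℂ) : ℝ :=
  circleAverage (poissonKernel 0 w • θ) 0 R

section PoissonIntegral

variable {θ : ℂ → ℝ} {R : ℝ}

theorem harmonicOnNhd_poissonIntegral (hθ : CircleIntegrable θ 0 R) :
    HarmonicOnNhd (poissonIntegral θ R) (ball 0 R) := by
  have hθℂ : CircleIntegrable (fun ζ => (θ ζ : ℂ)) 0 R := by
    simp only [CircleIntegrable, intervalIntegrable_iff] at hθ ⊢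
    exact ofRealCLM.integrable_comp hθ
  intro w hw
  have hre : poissonIntegral θ R =ᶠ[𝓝 w]
      fun x => (circleAverage (fun ζ => herglotzRieszKernel 0 x ζ • (θ ζ : ℂ)) 0 R).re := by
    filter_upwards [isOpen_ball.mem_nhds hw] with x hx
    rw [re_circleAverage_herglotzRieszKernel_smul hθ hx, poissonIntegral,
      poissonKernel_eq_re_herglotzRieszKernel]
  exact (harmonicAt_congr_nhds hre).2
    (analyticOnNhd_circleAverage_herglotzRieszKernel_smul hθℂ w hw).harmonicAt_re

theorem poissonKernel_mul_abs_sub_le {w z₀ ζ : ℂ} (hw : w ∈ ball 0 R) (hζ : ζ ∈ sphere 0 R)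
    (hz₀ : z₀ ∈ sphere 0 R) {ε δ M : ℝ} (hδ : 0 < δ) (hM : ∀ ζ ∈ sphere 0 R, |θ ζ| ≤ M)
    (hε : ∀ ζ ∈ sphere 0 R, ‖ζ - z₀‖ < δ → |θ ζ - θ z₀| ≤ ε) (hwz₀ : ‖w - z₀‖ ≤ δ / 2) :
    poissonKernel 0 w ζ * |θ ζ - θ z₀| ≤
      poissonKernel 0 w ζ * ε + 16 * M * R * ‖w - z₀‖ / δ ^ 2 := by
  have hP := poissonKernel_nonneg hw hζ
  have hR : 0 ≤ R := (pos_of_mem_ball hw).le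
  have hC : 0 ≤ 16 * M * R * ‖w - z₀‖ / δ ^ 2 := by
    have : 0 ≤ M := (abs_nonneg _).trans (hM z₀ hz₀)
    positivity
  by_cases hnear : ‖ζ - z₀‖ < δ
  · nlinarith [hε ζ hζ hnear]
  · have hε₀ : 0 ≤ ε := by simpa using hε z₀ hz₀ (by simpa using hδ)
    have hfar := poissonKernel_le hw hζ hz₀ hδ (not_lt.1 hnear) hwz₀
    have hosc : |θ ζ - θ z₀| ≤ 2 * M := by
      linarith [abs_sub (θ ζ) (θ z₀), hM ζ hζ, hM z₀ hz₀]
    calc poissonKernel 0 w ζ * |θ ζ - θ z₀| ≤ 8 * R * ‖w - z₀‖ / δ ^ 2 * (2 * M) := by gcongr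
      _ = 16 * M * R * ‖w - z₀‖ / δ ^ 2 := by ring
      _ ≤ poissonKernel 0 w ζ * ε + 16 * M * R * ‖w - z₀‖ / δ ^ 2 := by nlinarith

theorem abs_poissonIntegral_sub_le (hθ : ContinuousOn θ (sphere 0 R)) {w z₀ : ℂ}
    (hw : w ∈ ball 0 R) (hz₀ : z₀ ∈ sphere 0 R) {ε δ M : ℝ} (hδ : 0 < δ)
    (hM : ∀ ζ ∈ sphere 0 R, |θ ζ| ≤ M)
    (hε : ∀ ζ ∈ sphere 0 R, ‖ζ - z₀‖ < δ → |θ ζ - θ z₀| ≤ ε) (hwz₀ : ‖w - z₀‖ ≤ δ / 2) :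
    |poissonIntegral θ R w - θ z₀| ≤ ε + 16 * M * R * ‖w - z₀‖ / δ ^ 2 := by
  have hR : 0 ≤ R := (pos_of_mem_ball hw).le
  have hP := continuousOn_poissonKernel_sphere hw
  set C := 16 * M * R * ‖w - z₀‖ / δ ^ 2
  have hpoint : ∀ ζ ∈ sphere (0 : ℂ) R,
      |(poissonKernel 0 w • (θ - fun _ => θ z₀) : ℂ → ℝ) ζ| ≤
        (poissonKernel 0 w • fun _ => ε) ζ + C := by
    intro ζ hζ
    simp only [Pi.smul_apply', Pi.sub_apply, smul_eq_mul, abs_mul,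
      abs_of_nonneg (poissonKernel_nonneg hw hζ)]
    exact poissonKernel_mul_abs_sub_le hw hζ hz₀ hδ hM hε hwz₀
  have hci : ∀ {f : ℂ → ℝ}, ContinuousOn f (sphere 0 R) → CircleIntegrable f 0 R :=
    fun hf => hf.circleIntegrable hR
  calc |poissonIntegral θ R w - θ z₀|
      = |circleAverage (poissonKernel 0 w • (θ - fun _ => θ z₀)) 0 R| := by
        rw [smul_sub, circleAverage_sub (hci (hP.smul hθ)) (hci (hP.smul continuousOn_const)),
          circleAverage_poissonKernel_smul_const hw, poissonIntegral]
    _ ≤ circleAverage |poissonKernel 0 w • (θ - fun _ => θ z₀)| 0 R :=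
        abs_circleAverage_le_circleAverage_abs
    _ ≤ circleAverage ((poissonKernel 0 w • fun _ => ε) + fun _ => C) 0 R :=
        circleAverage_mono (hci (hP.smul (hθ.sub continuousOn_const)).abs)
          (hci ((hP.smul continuousOn_const).add continuousOn_const))
          (by rw [abs_of_nonneg hR]; exact hpoint)
    _ = ε + C := by
        rw [circleAverage_add (hci (hP.smul continuousOn_const)) (hci continuousOn_const),
          circleAverage_poissonKernel_smul_const hw, circleAverage_const]

theorem tendsto_poissonIntegral_nhdsWithin_ball (hθ : ContinuousOn θ (sphere 0 R)) {z₀ : ℂ}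
    (hz₀ : z₀ ∈ sphere 0 R) :
    Tendsto (poissonIntegral θ R) (𝓝[ball 0 R] z₀) (𝓝 (θ z₀)) := by
  obtain ⟨M, hM⟩ := (isCompact_sphere (0 : ℂ) R).exists_bound_of_continuousOn hθ
  rw [Metric.tendsto_nhdsWithin_nhds]
  intro ε hε
  obtain ⟨δ, hδ, hθδ⟩ := Metric.continuousWithinAt_iff.1 (hθ z₀ hz₀) (ε / 2) (half_pos hε)
  set K := 16 * M * R / δ ^ 2
  have hK : 0 ≤ K := by
    have : 0 ≤ M := (norm_nonneg _).trans (hM z₀ hz₀)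
    have : 0 ≤ R := (norm_nonneg z₀).trans_eq (mem_sphere_zero_iff_norm.1 hz₀)
    positivity
  refine ⟨min (δ / 2) (ε / (2 * (K + 1))), by positivity, fun {w} hw hwz₀ => ?_⟩
  rw [dist_eq_norm] at hwz₀ ⊢
  have hbound := abs_poissonIntegral_sub_le hθ hw hz₀ hδ hM
    (fun ζ hζ hζz₀ => (hθδ hζ (by rwa [dist_eq_norm])).le) (hwz₀.le.trans (min_le_left _ _))
  have hsmall : K * ‖w - z₀‖ < ε / 2 := by
    have h := hwz₀.trans_le (min_le_right _ _)
    rw [lt_div_iff₀ (by positivity)] at h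
    nlinarith [norm_nonneg (w - z₀)]
  rw [Real.norm_eq_abs]
  calc |poissonIntegral θ R w - θ z₀| ≤ ε / 2 + K * ‖w - z₀‖ := by
        convert hbound using 2; ring
    _ < ε := by linarith

end PoissonIntegral

section PoissonExtension

open Classical

noncomputable def poissonExtension (θ : ℂ → ℝ) (R : ℝ) : ℂ → ℝ :=
  (ball 0 R).piecewise (poissonIntegral θ R) θ

variable {θ : ℂ → ℝ} {R : ℝ}

theorem poissonExtension_eqOn_ball :
    EqOn (poissonExtension θ R) (poissonIntegral θ R) (ball 0 R) :=
  piecewise_eqOn _ _ _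

theorem poissonExtension_eqOn_sphere : EqOn (poissonExtension θ R) θ (sphere 0 R) :=
  fun _ hζ => piecewise_eq_of_notMem _ _ _ (disjoint_left.1 sphere_disjoint_ball hζ)

theorem harmonicOnNhd_poissonExtension (hθ : CircleIntegrable θ 0 R) :
    HarmonicOnNhd (poissonExtension θ R) (ball 0 R) := fun w hw =>
  (harmonicAt_congr_nhds (poissonExtension_eqOn_ball.eventuallyEq_of_mem
    (isOpen_ball.mem_nhds hw))).2 (harmonicOnNhd_poissonIntegral hθ w hw)

theorem continuousOn_poissonExtension (hθ : ContinuousOn θ (sphere 0 R)) :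
    ContinuousOn (poissonExtension θ R) (closedBall 0 R) := by
  rw [← ball_union_sphere]
  rintro z (hz | hz)
  · have hθ' := hθ.circleIntegrable (pos_of_mem_ball hz).le
    exact (harmonicOnNhd_poissonExtension hθ' z hz).1.continuousAt.continuousWithinAt
  · refine continuousWithinAt_union.2 ⟨?_, ?_⟩
    · rw [ContinuousWithinAt, poissonExtension_eqOn_sphere hz]
      exact tendsto_nhdsWithin_congr (fun w hw => (poissonExtension_eqOn_ball hw).symm)
        (tendsto_poissonIntegral_nhdsWithin_ball hθ hz)
    · exact (hθ z hz).congr poissonExtension_eqOn_sphere (poissonExtension_eqOn_sphere hz)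

theorem eqOn_poissonExtension_of_harmonicContOnCl {g : ℂ → ℝ}
    (hg : HarmonicContOnCl g (ball 0 R)) (hgθ : EqOn g θ (sphere 0 R)) :
    EqOn g (poissonExtension θ R) (closedBall 0 R) := by
  rw [← ball_union_sphere]
  rintro z (hz | hz)
  · rw [poissonExtension_eqOn_ball hz, ← hg.circleAverage_poissonKernel_smul hz, poissonIntegral]
    refine circleAverage_congr_sphere fun ζ hζ => ?_
    rw [abs_of_pos (pos_of_mem_ball hz)] at hζ
    simp only [Pi.smul_apply', hgθ hζ]
  · rw [hgθ hz, poissonExtension_eqOn_sphere hz]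

end PoissonExtension

theorem stmt12 (θ : ℂ → ℝ)
    (hθ : ContinuousOn θ (Metric.sphere 0 1)) :
    ∃ f : ℂ → ℝ,
      (ContinuousOn f (Metric.closedBall 0 1) ∧
        HarmonicOn f (Metric.ball 0 1) ∧
        ∀ ζ ∈ Metric.sphere (0 : ℂ) 1, f ζ = θ ζ) ∧
      ∀ g : ℂ → ℝ,
        (ContinuousOn g (Metric.closedBall 0 1) ∧
          HarmonicOn g (Metric.ball 0 1) ∧
          ∀ ζ ∈ Metric.sphere (0 : ℂ) 1, g ζ = θ ζ) →
        ∀ z ∈ Metric.closedBall (0 : ℂ) 1, g z = f z := by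
  refine ⟨poissonExtension θ 1, ⟨continuousOn_poissonExtension hθ,
    (harmonicOn_iff_harmonicOnNhd isOpen_ball).2
      (harmonicOnNhd_poissonExtension (hθ.circleIntegrable zero_le_one)),
    poissonExtension_eqOn_sphere⟩, ?_⟩
  rintro g ⟨hgc, hgh, hgθ⟩
  have hg : HarmonicContOnCl g (ball 0 1) :=
    ⟨(harmonicOn_iff_harmonicOnNhd isOpen_ball).1 hgh, by rwa [closure_ball 0 one_ne_zero]⟩
  exact eqOn_poissonExtension_of_harmonicContOnCl hg hgθ
end
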